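/- arXiv:2111.11788 — 2 statements merged into one kernel-verified Lean document; each statement's English description precedes it below -/
import Mathlib

section
/- The greedy list-scheduling algorithm, which assigns each task (in arbitrary order) to a processor with the least total work already assigned, produces a schedule with makespan W < 2·W_opt, where W_opt is the optimal makespan. -/
open Finset

/-- Final load of processor `j` under assignment `assign`. -/
def loadOf {n p : ℕ} (w : Fin n → ℝ) (assign : Fin n → Fin p) (j : Fin p) : ℝ :=
  ∑ i ∈ Finset.univ.filter (fun i => assign i = j), w i

/-- Makespan of an assignment: the maximum processor load. -/
def makespan {n p : ℕ} (hp : 0 < p) (w : Fin n → ℝ) (assign : Fin n → Fin p) : ℝ :=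
  Finset.univ.sup' ⟨⟨0, hp⟩, Finset.mem_univ _⟩ (loadOf w assign)

/-- Load of processor `j` coming from the tasks preceding task `i` in the list order. -/
def loadBefore {n p : ℕ} (w : Fin n → ℝ) (assign : Fin n → Fin p) (i : Fin n) (j : Fin p) : ℝ :=
  ∑ k ∈ Finset.univ.filter (fun k => k < i ∧ assign k = j), w k


lemma sum_loadOf {n p : ℕ} (w : Fin n → ℝ) (a : Fin n → Fin p) :
    ∑ j, loadOf w a j = ∑ i, w i := by
  unfold loadOf
  exact Finset.sum_fiberwise_of_maps_to (fun i _ => Finset.mem_univ _) w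

lemma sum_loadBefore {n p : ℕ} (w : Fin n → ℝ) (a : Fin n → Fin p) (i : Fin n) :
    ∑ j, loadBefore w a i j = ∑ k ∈ Finset.univ.filter (fun k => k < i), w k := by
  unfold loadBefore
  have : ∀ j, (Finset.univ.filter (fun k => k < i ∧ a k = j))
      = (Finset.univ.filter (fun k => k < i)).filter (fun k => a k = j) := by
    intro j; rw [Finset.filter_filter]
  simp_rw [this]
  exact Finset.sum_fiberwise_of_maps_to (fun k _ => Finset.mem_univ _) w

lemma le_loadOf {n p : ℕ} (w : Fin n → ℝ) (hw : ∀ i, 0 < w i) (a : Fin n → Fin p)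
    (i : Fin n) : w i ≤ loadOf w a (a i) := by
  unfold loadOf
  exact Finset.single_le_sum (f := w) (fun k _ => (hw k).le)
    (by simp)

/-- greedy list scheduling (each task, in order, goes to a currently
least-loaded processor) has makespan strictly less than twice the optimal makespan. -/
theorem greedy_two_approximation {n p : ℕ} (hn : 0 < n) (hp : 0 < p)
    (w : Fin n → ℝ) (hw : ∀ i, 0 < w i)
    (assign : Fin n → Fin p)
    (hgreedy : ∀ i j, loadBefore w assign i (assign i) ≤ loadBefore w assign i j) :
    ∀ assign' : Fin n → Fin p,
      makespan hp w assign < 2 * makespan hp w assign' := by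
  intro assign'
  set W' := makespan hp w assign' with hW'
  -- lower bounds on the optimal makespan
  have hle' : ∀ j, loadOf w assign' j ≤ W' :=
    fun j => Finset.le_sup' (loadOf w assign') (Finset.mem_univ j)
  have hsumW' : ∑ i, w i ≤ (p : ℝ) * W' := by
    calc ∑ i, w i = ∑ j, loadOf w assign' j := (sum_loadOf w assign').symm
    _ ≤ ∑ _j : Fin p, W' := Finset.sum_le_sum (fun j _ => hle' j)
    _ = (p : ℝ) * W' := by simp [mul_comm]
  -- the processor achieving the greedy makespan
  obtain ⟨j0, -, hj0⟩ := Finset.exists_mem_eq_sup'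
    (⟨⟨0, hp⟩, Finset.mem_univ _⟩ : (Finset.univ : Finset (Fin p)).Nonempty)
    (loadOf w assign)
  have hmk : makespan hp w assign = loadOf w assign j0 := hj0
  set S := Finset.univ.filter (fun k => assign k = j0) with hS
  have hSne : S.Nonempty := by
    by_contra h
    rw [Finset.not_nonempty_iff_eq_empty] at h
    have h0 : loadOf w assign j0 = 0 := by rw [loadOf, ← hS, h, Finset.sum_empty]
    have h1 : w ⟨0, hn⟩ ≤ loadOf w assign (assign ⟨0, hn⟩) := le_loadOf w hw assign _
    have h2 : loadOf w assign (assign ⟨0, hn⟩) ≤ makespan hp w assign :=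
      Finset.le_sup' (loadOf w assign) (Finset.mem_univ _)
    have h3 := hw ⟨0, hn⟩
    rw [hmk, h0] at h2
    linarith
  set i := S.max' hSne with hi
  have hiS : i ∈ S := S.max'_mem hSne
  have hai : assign i = j0 := by simpa [hS] using hiS
  have herase : S.erase i = Finset.univ.filter (fun k => k < i ∧ assign k = j0) := by
    ext k
    simp only [Finset.mem_erase, hS, Finset.mem_filter, Finset.mem_univ, true_and]
    constructor
    · rintro ⟨hne, hk⟩
      exact ⟨lt_of_le_of_ne (S.le_max' k (by simp [hS, hk])) hne, hk⟩
    · rintro ⟨hlt, hk⟩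
      exact ⟨ne_of_lt hlt, hk⟩
  have hdecomp : loadOf w assign j0 = loadBefore w assign i j0 + w i := by
    rw [loadOf, loadBefore, ← herase, ← hS]
    rw [← Finset.sum_erase_add S w hiS]
  -- the greedy bound
  have hLB : (p : ℝ) * loadBefore w assign i j0 ≤ ∑ i, w i - w i := by
    have h1 : ∀ j : Fin p, loadBefore w assign i j0 ≤ loadBefore w assign i j := by
      intro j
      have := hgreedy i j
      rwa [hai] at this
    have h2 : (p : ℝ) * loadBefore w assign i j0 ≤ ∑ j, loadBefore w assign i j := by
      calc (p : ℝ) * loadBefore w assign i j0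
          = ∑ _j : Fin p, loadBefore w assign i j0 := by simp [mul_comm]
        _ ≤ ∑ j, loadBefore w assign i j := Finset.sum_le_sum (fun j _ => h1 j)
    rw [sum_loadBefore] at h2
    refine h2.trans ?_
    rw [← Finset.sum_erase_eq_sub (Finset.mem_univ i)]
    refine Finset.sum_le_sum_of_subset_of_nonneg ?_ (fun k _ _ => (hw k).le)
    intro k hk
    simp only [Finset.mem_filter, Finset.mem_univ, true_and] at hk
    simp [ne_of_lt hk]
  have hwopt : w i ≤ W' := (le_loadOf w hw assign' i).trans (hle' (assign' i))
  have hp1 : (1 : ℝ) ≤ (p : ℝ) := by exact_mod_cast hp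
  have hwi := hw i
  have key : (p : ℝ) * makespan hp w assign < (p : ℝ) * (2 * W') := by
    rw [hmk, hdecomp]
    nlinarith [mul_nonneg (sub_nonneg.2 hp1) (sub_nonneg.2 hwopt)]
  exact lt_of_mul_lt_mul_left key (by positivity)
end

section
/- The incremental greedy scheduling algorithm for multiprocessor tasks is a 2-approximation: under the divisibility assumption q_0 | q_1 | ... | q_M | p, the makespan W produced by assigning tasks in order of decreasing processor requirement q (each task assigned to a group of q least-loaded processors) satisfies W < 2·W_opt. -/
open Finset

/-- The `k`-th contiguous block of `q` processors among `Fin p`. -/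
def block (p q k : ℕ) : Finset (Fin p) :=
  Finset.univ.filter (fun i => k * q ≤ (i : ℕ) ∧ (i : ℕ) < (k + 1) * q)

/-- The current completion time (maximal load) of the `k`-th block of `q`
processors; a task assigned to this block starts at this time. -/
noncomputable def blockMax {p : ℕ} (load : Fin p → ℝ) (q k : ℕ) : ℝ :=
  if h : (block p q k).Nonempty then (block p q k).sup' h load else 0

/-- `GreedyRun p tasks load final starts`: starting from per-processor loads
`load`, the incremental greedy algorithm processes the list `tasks` (each task
is a pair `(q, w)` of processor requirement and execution time) in order,
assigning each task to a least-loaded group of `q` processors; `final` are the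
resulting loads and `starts` records the start time of each task. -/
inductive GreedyRun (p : ℕ) :
    List (ℕ × ℝ) → (Fin p → ℝ) → (Fin p → ℝ) → List ℝ → Prop
  | nil (load : Fin p → ℝ) : GreedyRun p [] load load []
  | cons (q : ℕ) (w : ℝ) (k : ℕ) (rest : List (ℕ × ℝ))
      (load final : Fin p → ℝ) (starts : List ℝ)
      (hk : k < p / q)
      (hmin : ∀ k' < p / q, blockMax load q k ≤ blockMax load q k')
      (hrun : GreedyRun p rest
        (fun i => if i ∈ block p q k then blockMax load q k + w else load i)
        final starts) :
      GreedyRun p ((q, w) :: rest) load final (blockMax load q k :: starts)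

/-!
Since the requirements are processed in decreasing order and each divides the previous ones, the
loads stay constant on the blocks of every requirement still to come. Hence the least-loaded block
of the current task starts no later than the average load. A valid schedule fits its whole work
into `p` processors over `[0, W_opt]`, so the average load plus the work still to come is at most
`p * W_opt`: every task starts before `W_opt` and, lasting at most `W_opt`, ends before
`2 * W_opt`.
-/

open MeasureTheory

section Blocks

variable {p q k : ℕ}

lemma mem_block_iff (hq : 0 < q) {i : Fin p} : i ∈ block p q k ↔ (i : ℕ) / q = k := by
  simp only [block, mem_filter, mem_univ, true_and]
  constructor
  · rintro ⟨h₁, h₂⟩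
    exact Nat.div_eq_of_lt_le h₁ h₂
  · rintro rfl
    exact ⟨Nat.div_mul_le_self _ _, (Nat.lt_mul_div_succ _ hq).trans_eq (mul_comm _ _)⟩

lemma card_block (h : (k + 1) * q ≤ p) : #(block p q k) = q := by
  have : (block p q k).map Fin.valEmbedding = Ico (k * q) ((k + 1) * q) := by
    ext n
    simp only [block, mem_map, mem_filter, mem_univ, true_and, Fin.valEmbedding_apply, mem_Ico]
    constructor
    · rintro ⟨i, hi, rfl⟩
      exact hi
    · intro hn
      exact ⟨⟨n, hn.2.trans_le h⟩, hn, rfl⟩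
  rw [← card_map, this, Nat.card_Ico, add_mul, one_mul, Nat.add_sub_cancel_left]

end Blocks

def BlockConstant {p : ℕ} {β : Type*} (q : ℕ) (load : Fin p → β) : Prop :=
  ∀ i j : Fin p, (i : ℕ) / q = j / q → load i = load j

namespace BlockConstant

variable {p q k : ℕ}

lemma piecewise_block {β : Type*} {q' : ℕ} {load : Fin p → β} (h : BlockConstant q' load)
    (hq : 0 < q) (hd : q' ∣ q) (v : β) :
    BlockConstant q' (fun i => if i ∈ block p q k then v else load i) := by
  intro i j hij
  have hq' : (i : ℕ) / q = j / q := by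
    obtain ⟨d, rfl⟩ := hd
    rw [← Nat.div_div_eq_div_mul, ← Nat.div_div_eq_div_mul, hij]
  simp only [mem_block_iff hq, hq', h i j hij]

variable {load : Fin p → ℝ}

lemma blockMax_eq (h : BlockConstant q load) {i : Fin p} (hi : i ∈ block p q k) :
    blockMax load q k = load i := by
  have hq : 0 < q := Nat.pos_of_ne_zero (by rintro rfl; simp [block] at hi)
  rw [blockMax, dif_pos ⟨i, hi⟩]
  refine le_antisymm (sup'_le _ _ fun j hj => (h j i ?_).le) (le_sup' _ hi)
  rw [(mem_block_iff hq).1 hi, (mem_block_iff hq).1 hj]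

lemma blockMax_le (h : BlockConstant q load) (hq : 0 < q) (hqp : q ∣ p)
    (hmin : ∀ k' < p / q, blockMax load q k ≤ blockMax load q k') (i : Fin p) :
    blockMax load q k ≤ load i := by
  rw [← h.blockMax_eq ((mem_block_iff hq).2 rfl)]
  exact hmin _ (Nat.div_lt_div_of_lt_of_dvd hqp i.2)

lemma sum_piecewise_block (h : BlockConstant q load) (hqp : q ∣ p) (hk : k < p / q) (w : ℝ) :
    ∑ i, (if i ∈ block p q k then blockMax load q k + w else load i) = ∑ i, load i + q * w := by
  have hcard : #(block p q k) = q := card_block <| by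
    calc (k + 1) * q ≤ p / q * q := Nat.mul_le_mul_right _ hk
      _ = p := Nat.div_mul_cancel hqp
  calc ∑ i, (if i ∈ block p q k then blockMax load q k + w else load i)
      = ∑ i, (load i + if i ∈ block p q k then w else 0) := by
        refine sum_congr rfl fun i _ => ?_
        split_ifs with hi
        · rw [h.blockMax_eq hi]
        · rw [add_zero]
    _ = ∑ i, load i + q * w := by
        rw [sum_add_distrib, sum_ite_mem, univ_inter, sum_const, hcard, nsmul_eq_mul]

end BlockConstant

theorem GreedyRun.lt_of_work_le {p : ℕ} {B : ℝ} {tasks : List (ℕ × ℝ)}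
    {load final : Fin p → ℝ} {starts : List ℝ} (hrun : GreedyRun p tasks load final starts)
    (hdvd : ∀ t ∈ tasks, t.1 ∣ p) (hchain : tasks.Pairwise fun a b => b.1 ∣ a.1)
    (hw : ∀ t ∈ tasks, 0 < t.2 ∧ t.2 ≤ B) (hconst : ∀ t ∈ tasks, BlockConstant t.1 load)
    (hload : ∀ i, load i < 2 * B)
    (hwork : ∑ i, load i + (tasks.map fun t => (t.1 : ℝ) * t.2).sum ≤ p * B) (i : Fin p) :
    final i < 2 * B := by
  induction hrun with
  | nil => exact hload i
  | cons q w k rest load final starts hk hmin _ ih =>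
    simp only [List.mem_cons, forall_eq_or_imp, List.pairwise_cons, List.map_cons,
      List.sum_cons] at hdvd hchain hw hconst hwork
    have hq : 0 < q := Nat.pos_of_ne_zero (by rintro rfl; simp at hk)
    have hrest : 0 ≤ (rest.map fun t => (t.1 : ℝ) * t.2).sum :=
      List.sum_nonneg fun x hx => by
        obtain ⟨t, ht, rfl⟩ := List.mem_map.1 hx
        exact mul_nonneg (Nat.cast_nonneg _) (hw.2 t ht).1.le
    have hstart : blockMax load q k < B := by
      have havg : (p : ℝ) * blockMax load q k ≤ ∑ i, load i := by
        calc (p : ℝ) * blockMax load q k = ∑ _i : Fin p, blockMax load q k := by simp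
          _ ≤ ∑ i, load i := sum_le_sum fun i _ => hconst.1.blockMax_le hq hdvd.1 hmin i
      have : (0 : ℝ) < q * w := mul_pos (by exact_mod_cast hq) hw.1.1
      exact lt_of_mul_lt_mul_left (by linarith) (Nat.cast_nonneg p)
    refine ih hdvd.2 hchain.2 hw.2
      (fun t ht => (hconst.2 t ht).piecewise_block hq (hchain.1 t ht) _) (fun j => ?_) ?_
    · dsimp only
      split_ifs
      · linarith [hw.1.2]
      · exact hload j
    · rw [hconst.1.sum_piecewise_block hdvd.1 hk]
      linarith

lemma sum_le_of_pairwiseDisjoint_Ico {ι : Type*} {s : Finset ι} {a w : ι → ℝ} {B : ℝ}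
    (hB : 0 ≤ B) (ha : ∀ i ∈ s, 0 ≤ a i) (hw : ∀ i ∈ s, 0 ≤ w i) (hend : ∀ i ∈ s, a i + w i ≤ B)
    (hdisj : (s : Set ι).PairwiseDisjoint fun i => Set.Ico (a i) (a i + w i)) :
    ∑ i ∈ s, w i ≤ B := by
  have : ∑ i ∈ s, ENNReal.ofReal (w i) ≤ ENNReal.ofReal B :=
    calc ∑ i ∈ s, ENNReal.ofReal (w i) = ∑ i ∈ s, volume (Set.Ico (a i) (a i + w i)) := by
          simp [Real.volume_Ico]
      _ = volume (⋃ i ∈ s, Set.Ico (a i) (a i + w i)) :=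
          (measure_biUnion_finset hdisj fun _ _ => measurableSet_Ico).symm
      _ ≤ volume (Set.Ico 0 B) :=
          measure_mono <| Set.iUnion₂_subset fun i hi => Set.Ico_subset_Ico (ha i hi) (hend i hi)
      _ = ENNReal.ofReal B := by simp
  rwa [← ENNReal.ofReal_sum_of_nonneg hw, ENNReal.ofReal_le_ofReal_iff hB] at this

lemma sum_card_mul_le_of_schedule {ι α : Type*} [Fintype ι] [Fintype α] [DecidableEq α]
    {start d : ι → ℝ} {procs : ι → Finset α} {B : ℝ} (hB : 0 ≤ B)
    (hstart : ∀ i, 0 ≤ start i) (hd : ∀ i, 0 ≤ d i)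
    (hov : ∀ i j, i ≠ j → (procs i ∩ procs j).Nonempty →
      start i + d i ≤ start j ∨ start j + d j ≤ start i)
    (hend : ∀ i, start i + d i ≤ B) :
    ∑ i, (#(procs i) : ℝ) * d i ≤ Fintype.card α * B := by
  have hproc (x : α) : ∑ i with x ∈ procs i, d i ≤ B := by
    refine sum_le_of_pairwiseDisjoint_Ico hB (fun i _ => hstart i) (fun i _ => hd i)
      (fun i _ => hend i) fun i hi j hj hij => ?_
    simp only [coe_filter, mem_univ, true_and, Set.mem_ofPred_eq] at hi hj
    rw [Function.onFun, Set.Ico_disjoint_Ico]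
    rcases hov i j hij ⟨x, mem_inter.2 ⟨hi, hj⟩⟩ with h | h
    · exact (min_le_left _ _).trans (h.trans (le_max_right _ _))
    · exact (min_le_right _ _).trans (h.trans (le_max_left _ _))
  calc ∑ i, (#(procs i) : ℝ) * d i = ∑ i, ∑ _x ∈ procs i, d i := by simp
    _ = ∑ x, ∑ i with x ∈ procs i, d i := sum_comm' (by simp)
    _ ≤ ∑ _x : α, B := sum_le_sum fun x _ => hproc x
    _ = Fintype.card α * B := by simp

lemma dvd_of_chain_of_le {M : ℕ} {qs : ℕ → ℕ} (hchain : ∀ ℓ < M, qs ℓ ∣ qs (ℓ + 1))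
    {ℓ ℓ' : ℕ} (h : ℓ ≤ ℓ') (hM : ℓ' ≤ M) : qs ℓ ∣ qs ℓ' := by
  induction ℓ', h using Nat.le_induction with
  | base => rfl
  | succ n hn ih => exact (ih (by omega)).trans (hchain n (by omega))

lemma dvd_of_chain_of_apply_le {M : ℕ} {qs : ℕ → ℕ} (hq : ∀ ℓ ≤ M, 0 < qs ℓ)
    (hchain : ∀ ℓ < M, qs ℓ ∣ qs (ℓ + 1)) {ℓ ℓ' : ℕ} (hℓ : ℓ ≤ M) (hℓ' : ℓ' ≤ M)
    (hle : qs ℓ ≤ qs ℓ') : qs ℓ ∣ qs ℓ' := by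
  rcases le_total ℓ ℓ' with h | h
  · exact dvd_of_chain_of_le hchain h hℓ'
  · have := dvd_of_chain_of_le hchain h hℓ
    rw [le_antisymm hle (Nat.le_of_dvd (hq ℓ hℓ) this)]

/-- the incremental greedy scheduling algorithm for
multiprocessor tasks is a 2-approximation. Under the divisibility chain
`q_0 ∣ q_1 ∣ … ∣ q_M ∣ p`, if the (positive-duration) tasks, each requiring
some `q_ℓ` processors, are processed in order of decreasing processor
requirement, each assigned to a least-loaded group, then the resulting
makespan is strictly less than twice the makespan of any valid schedule
(in particular, less than `2·W_opt`). A valid schedule assigns each task a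
nonnegative start time and a set of processors of the required cardinality so
that tasks sharing a processor do not overlap in time; `Wopt` is any upper
bound for its completion times (e.g. its makespan). -/
theorem incremental_greedy_two_approximation {p M : ℕ} (hp : 0 < p)
    (qs : ℕ → ℕ) (hq : ∀ ℓ ≤ M, 0 < qs ℓ)
    (hchain : ∀ ℓ < M, qs ℓ ∣ qs (ℓ + 1)) (hqp : qs M ∣ p)
    (tasks : List (ℕ × ℝ)) (htasks : tasks ≠ [])
    (hreq : ∀ t ∈ tasks, ∃ ℓ ≤ M, t.1 = qs ℓ)
    (hpos : ∀ t ∈ tasks, 0 < t.2)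
    (hsorted : tasks.Pairwise (fun a b => b.1 ≤ a.1))
    (final : Fin p → ℝ) (starts : List ℝ)
    (hrun : GreedyRun p tasks (fun _ => 0) final starts) :
    ∀ (start : Fin tasks.length → ℝ) (procs : Fin tasks.length → Finset (Fin p))
      (Wopt : ℝ),
      (∀ i, 0 ≤ start i) →
      (∀ i, (procs i).card = (tasks.get i).1) →
      (∀ i j, i ≠ j → (procs i ∩ procs j).Nonempty →
        start i + (tasks.get i).2 ≤ start j ∨ start j + (tasks.get j).2 ≤ start i) →
      (∀ i, start i + (tasks.get i).2 ≤ Wopt) →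
      Finset.univ.sup' ⟨⟨0, hp⟩, Finset.mem_univ _⟩ final < 2 * Wopt := by
  intro start procs Wopt hstart hcard hov hend
  have hw : ∀ t ∈ tasks, 0 < t.2 ∧ t.2 ≤ Wopt := by
    intro t ht
    obtain ⟨n, rfl⟩ := List.mem_iff_get.1 ht
    exact ⟨hpos _ ht, by linarith [hstart n, hend n]⟩
  have hW : 0 < Wopt := by
    obtain ⟨t, ht⟩ := List.exists_mem_of_ne_nil tasks htasks
    linarith [hw t ht]
  have hwork : (tasks.map fun t => (t.1 : ℝ) * t.2).sum ≤ p * Wopt := by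
    rw [← Fin.sum_univ_fun_getElem]
    simpa [hcard] using sum_card_mul_le_of_schedule hW.le hstart
      (fun n => (hw _ (List.get_mem tasks n)).1.le) hov hend
  have hdvd : ∀ t ∈ tasks, t.1 ∣ p := by
    intro t ht
    obtain ⟨ℓ, hℓ, h⟩ := hreq t ht
    exact h ▸ (dvd_of_chain_of_le hchain hℓ le_rfl).trans hqp
  have hdvd_chain : tasks.Pairwise fun a b => b.1 ∣ a.1 := by
    refine hsorted.imp_of_mem fun {a b} ha hb hle => ?_
    obtain ⟨ℓ, hℓ, ha'⟩ := hreq a ha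
    obtain ⟨ℓ', hℓ', hb'⟩ := hreq b hb
    rw [ha', hb'] at hle ⊢
    exact dvd_of_chain_of_apply_le hq hchain hℓ' hℓ hle
  refine (sup'_lt_iff _).2 fun i _ => hrun.lt_of_work_le hdvd hdvd_chain hw
    (fun _ _ _ _ _ => rfl) (fun _ => by linarith) (by simpa using hwork) i
end
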